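/- arXiv:2505.15056 — 6 statements merged into one kernel-verified Lean document; each statement's English description precedes it below -/
import Mathlib

section
/- Zero entry dominance: if A ∈ S^m(ℝ^n) is completely positive and the index multiset {i_1,...,i_m} has its set of distinct elements contained in the set of distinct elements of {j_1,...,j_m}, then A_{j_1,...,j_m} > 0 implies A_{i_1,...,i_m} > 0. -/
def CompletelyPositive {n m : ℕ} (A : (Fin m → Fin n) → ℝ) : Prop :=
  ∃ (R : ℕ) (v : Fin R → Fin n → ℝ),
    (∀ r i, 0 ≤ v r i) ∧ ∀ idx : Fin m → Fin n, A idx = ∑ r, ∏ t, v r (idx t)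

/-- Zero entry dominance property: for a completely positive symmetric tensor `A`,
if the set of distinct elements of the index tuple `i` is contained in that of `j`
and `A j > 0`, then `A i > 0`. -/
theorem zero_entry_dominance {n m : ℕ} (A : (Fin m → Fin n) → ℝ)
    (hsym : ∀ (idx : Fin m → Fin n) (σ : Equiv.Perm (Fin m)), A (idx ∘ σ) = A idx)
    (hA : CompletelyPositive A) (i j : Fin m → Fin n)
    (hsub : Set.range i ⊆ Set.range j) (hj : 0 < A j) : 0 < A i := by
  obtain ⟨R, v, hv, hAeq⟩ := hA
  rw [hAeq] at hj ⊢
  obtain ⟨r, hr⟩ : ∃ r, 0 < ∏ t, v r (j t) := by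
    by_contra h
    push_neg at h
    have : ∑ r, ∏ t, v r (j t) ≤ 0 :=
      Finset.sum_nonpos fun r _ => h r
    linarith
  have hterm : 0 < ∏ t, v r (i t) := by
    apply Finset.prod_pos
    intro t _
    obtain ⟨s, hs⟩ := hsub ⟨t, rfl⟩
    rw [← hs]
    have hne : v r (j s) ≠ 0 := by
      intro h0
      have : (∏ t, v r (j t)) = 0 := Finset.prod_eq_zero (Finset.mem_univ s) h0
      rw [this] at hr
      exact lt_irrefl 0 hr
    exact lt_of_le_of_ne (hv r (j s)) (Ne.symm hne)
  calc (0:ℝ) < ∏ t, v r (i t) := hterm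
    _ ≤ ∑ r, ∏ t, v r (i t) :=
      Finset.single_le_sum (fun r _ => Finset.prod_nonneg fun t _ => hv r (i t))
        (Finset.mem_univ r)
end

section
/- Contrapositive zero dominance: if A ∈ S^m(ℝ^n) is completely positive, A_{i_1,...,i_m} = 0, and [{i_1,...,i_m}] ⊆ [{j_1,...,j_m}], then A_{j_1,...,j_m} = 0. -/
/-- Contrapositive zero dominance: if `A` is completely positive, `A i = 0` and the set of
distinct elements of `i` is contained in that of `j`, then `A j = 0`. -/
theorem zero_dominance_contrapositive {n m : ℕ} (A : (Fin m → Fin n) → ℝ)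
    (hsym : ∀ (idx : Fin m → Fin n) (σ : Equiv.Perm (Fin m)), A (idx ∘ σ) = A idx)
    (hA : CompletelyPositive A) (i j : Fin m → Fin n)
    (hi : A i = 0) (hsub : Set.range i ⊆ Set.range j) : A j = 0 := by
  obtain ⟨R, v, hv, hform⟩ := hA
  rw [hform] at hi ⊢
  have hterm : ∀ r ∈ Finset.univ, (∏ t, v r (i t)) = 0 :=
    (Finset.sum_eq_zero_iff_of_nonneg (fun r _ =>
      Finset.prod_nonneg (fun t _ => hv r (i t)))).mp hi
  apply Finset.sum_eq_zero
  intro r _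
  obtain ⟨t, -, ht⟩ := Finset.prod_eq_zero_iff.mp (hterm r (Finset.mem_univ r))
  obtain ⟨t', ht'⟩ := hsub ⟨t, rfl⟩
  exact Finset.prod_eq_zero (Finset.mem_univ t') (by rw [ht', ht])
end

section
/- Let A ∈ S^m(ℝ^n) be completely positive with decomposition A = Σ_{r=1}^R (v^r)^{⊗m}, v^r nonnegative, and let V_1,...,V_p be the maximal cliques of the support multi-hypergraph of A. Then for each r ∈ [R] there exists k ∈ [p] with Supp(v^r) ⊆ V_k. -/
/-- `J` is a clique of the support multi-hypergraph of `A`: every size-`m` index tuple with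
all entries in `J` corresponds to a nonzero entry of `A`. -/
def IsClique {n m : ℕ} (A : (Fin m → Fin n) → ℝ) (J : Set (Fin n)) : Prop :=
  ∀ idx : Fin m → Fin n, (∀ t, idx t ∈ J) → A idx ≠ 0

/-- For a completely positive tensor `A = ∑ r (v r)^{⊗ m}` with nonnegative `v r`, the
support of each decomposition vector `v r` is contained in some maximal clique of the
support multi-hypergraph of `A`. -/
theorem support_subset_maximalClique {n m R : ℕ} (A : (Fin m → Fin n) → ℝ)
    (v : Fin R → Fin n → ℝ) (hv : ∀ r i, 0 ≤ v r i)
    (hdec : ∀ idx : Fin m → Fin n, A idx = ∑ r, ∏ t, v r (idx t)) :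
    ∀ r : Fin R, ∃ V : Set (Fin n), IsClique A V ∧
      (∀ W : Set (Fin n), IsClique A W → V ⊆ W → W = V) ∧
      {i | v r i ≠ 0} ⊆ V := by
  intro r
  set S : Set (Fin n) := {i | v r i ≠ 0} with hS
  have hSclique : IsClique A S := by
    intro idx hidx
    have hpos : 0 < ∏ t, v r (idx t) :=
      Finset.prod_pos fun t _ => lt_of_le_of_ne (hv r (idx t)) (Ne.symm (hidx t))
    have : 0 < ∑ r', ∏ t, v r' (idx t) := by
      refine Finset.sum_pos' (fun r' _ => Finset.prod_nonneg fun t _ => hv r' (idx t))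
        ⟨r, Finset.mem_univ r, hpos⟩
    rw [hdec idx]
    exact ne_of_gt this
  -- the collection of cliques containing S is finite and nonempty
  have hfin : ({W : Set (Fin n) | IsClique A W ∧ S ⊆ W}).Finite := Set.toFinite _
  obtain ⟨V, hV, hmax⟩ := Set.Finite.exists_maximalFor id _ hfin ⟨S, hSclique, subset_refl S⟩
  refine ⟨V, hV.1, ?_, hV.2⟩
  intro W hW hVW
  exact Set.Subset.antisymm (hmax ⟨hW, hV.2.trans hVW⟩ hVW) hVW
end

section
/- Necessary condition for complete positivity: Let A ∈ S^m(ℝ^n) and let V_1,...,V_p be the maximal subsets of [n] containing no distinct-element set of a zero entry of A. If A is completely positive, then for every index tuple with A_{i_1,...,i_m} ≠ 0, the set [{i_1,...,i_m}] is contained in some V_k. -/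
/-- Necessary condition for complete positivity: if `A` is completely positive, then for
every index tuple with `A idx ≠ 0`, the distinct-element set of `idx` is contained in a
maximal subset of `[n]` containing no distinct-element set of a zero entry of `A`. -/
theorem necessary_condition_completelyPositive {n m : ℕ} (A : (Fin m → Fin n) → ℝ)
    (hsym : ∀ (idx : Fin m → Fin n) (σ : Equiv.Perm (Fin m)), A (idx ∘ σ) = A idx)
    (hA : CompletelyPositive A) :
    ∀ idx : Fin m → Fin n, A idx ≠ 0 →
      ∃ S : Set (Fin n),
        (∀ j : Fin m → Fin n, A j = 0 → ¬ Set.range j ⊆ S) ∧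
        (∀ S' : Set (Fin n), (∀ j : Fin m → Fin n, A j = 0 → ¬ Set.range j ⊆ S') →
          S ⊆ S' → S' = S) ∧
        Set.range idx ⊆ S := by
  classical
  intro idx hidx
  obtain ⟨R, v, hv, hAv⟩ := hA
  -- Step 1: the base set range idx has the "good" property.
  have hgood : ∀ j : Fin m → Fin n, A j = 0 → ¬ Set.range j ⊆ Set.range idx := by
    intro j hj hsub
    -- Some term in the sum for A idx is positive.
    have hsum : A idx = ∑ r, ∏ t, v r (idx t) := hAv idx
    have hnn : ∀ r : Fin R, 0 ≤ ∏ t, v r (idx t) := fun r =>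
      Finset.prod_nonneg fun t _ => hv r (idx t)
    have : ∃ r : Fin R, ∏ t, v r (idx t) ≠ 0 := by
      by_contra h
      push_neg at h
      apply hidx
      rw [hsum]
      exact Finset.sum_eq_zero fun r _ => h r
    obtain ⟨r, hr⟩ := this
    -- Each factor is positive, hence v r i > 0 for all i ∈ range idx.
    have hpos : ∀ i ∈ Set.range idx, 0 < v r i := by
      rintro i ⟨t, rfl⟩
      have hne : v r (idx t) ≠ 0 := by
        intro h0
        exact hr (Finset.prod_eq_zero (Finset.mem_univ t) h0)
      exact lt_of_le_of_ne (hv r (idx t)) (Ne.symm hne)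
    have hjpos : 0 < ∏ t, v r (j t) :=
      Finset.prod_pos fun t _ => hpos (j t) (hsub ⟨t, rfl⟩)
    have : 0 < A j := by
      rw [hAv j]
      refine lt_of_lt_of_le hjpos ?_
      exact Finset.single_le_sum (fun r' _ => Finset.prod_nonneg fun t _ => hv r' (j t))
        (Finset.mem_univ r)
    exact this.ne' hj
  -- Step 2: pick a maximal good finset containing range idx.
  set P : Finset (Fin n) → Prop :=
    fun s => (∀ j : Fin m → Fin n, A j = 0 → ¬ Set.range j ⊆ ↑s) ∧ Set.range idx ⊆ ↑s
    with hP
  have hs0 : P (Finset.image idx Finset.univ) := by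
    constructor
    · intro j hj hsub
      apply hgood j hj
      intro x hx
      have := hsub hx
      simp only [Finset.coe_image, Finset.coe_univ, Set.image_univ] at this
      exact this
    · intro x hx
      simp only [Finset.coe_image, Finset.coe_univ, Set.image_univ]
      exact hx
  have hne : (Finset.univ.filter P).Nonempty :=
    ⟨Finset.image idx Finset.univ, by simpa using hs0⟩
  obtain ⟨s, hs, hmax⟩ := Finset.exists_max_image (Finset.univ.filter P) Finset.card hne
  rw [Finset.mem_filter] at hs
  obtain ⟨-, hsP, hsidx⟩ := hs
  refine ⟨↑s, hsP, ?_, hsidx⟩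
  intro S' hS' hsub
  have hS'fin : S'.toFinset ∈ Finset.univ.filter P := by
    rw [Finset.mem_filter]
    refine ⟨Finset.mem_univ _, ?_, ?_⟩
    · intro j hj hsubj
      exact hS' j hj (by simpa using hsubj)
    · intro x hx
      simp only [Set.coe_toFinset]
      exact hsub (hsidx hx)
  have hcard : S'.toFinset.card ≤ s.card := hmax _ hS'fin
  have hssub : s ⊆ S'.toFinset := by
    intro x hx
    simp only [Set.mem_toFinset]
    exact hsub hx
  have : S'.toFinset = s := (Finset.eq_of_subset_of_card_le hssub hcard).symm
  calc S' = ↑S'.toFinset := by simp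
    _ = ↑s := by rw [this]
end

section
/- Let A ∈ S^m(ℝ^n) be completely positive, with support multi-hypergraph whose maximal cliques are V_1,...,V_p. Then A can be written as A = Σ_{k=1}^p A^{(k)}, where each A^{(k)} is completely positive and every decomposition vector of A^{(k)} has support contained in V_k. -/
/-- If `A` is completely positive and `Vs 1, …, Vs p` are the maximal cliques of its
support multi-hypergraph, then `A = ∑ k B k` where each `B k` is completely positive
with all decomposition vectors supported in `Vs k`. -/
theorem completelyPositive_clique_decomposition {n m p : ℕ} (A : (Fin m → Fin n) → ℝ)
    (hsym : ∀ (idx : Fin m → Fin n) (σ : Equiv.Perm (Fin m)), A (idx ∘ σ) = A idx)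
    (hA : CompletelyPositive A) (Vs : Fin p → Set (Fin n))
    (hVs : ∀ S : Set (Fin n),
      (IsClique A S ∧ ∀ S' : Set (Fin n), IsClique A S' → S ⊆ S' → S' = S)
      ↔ ∃ k, Vs k = S) :
    ∃ B : Fin p → ((Fin m → Fin n) → ℝ),
      (∀ idx : Fin m → Fin n, A idx = ∑ k, B k idx) ∧
      ∀ k : Fin p, ∃ (R : ℕ) (w : Fin R → Fin n → ℝ),
        (∀ r i, 0 ≤ w r i) ∧ (∀ r i, w r i ≠ 0 → i ∈ Vs k) ∧
        ∀ idx : Fin m → Fin n, B k idx = ∑ r, ∏ t, w r (idx t) := by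
  classical
  obtain ⟨R, v, hv, hAv⟩ := hA
  -- each support is a clique
  have hclique : ∀ r : Fin R, IsClique A {i | v r i ≠ 0} := by
    intro r idx hidx
    have hpos : 0 < ∏ t, v r (idx t) :=
      Finset.prod_pos fun t _ => lt_of_le_of_ne (hv r (idx t)) (Ne.symm (hidx t))
    have : 0 < A idx := by
      rw [hAv]
      exact lt_of_lt_of_le hpos
        (Finset.single_le_sum
          (fun r' _ => Finset.prod_nonneg fun t _ => hv r' (idx t)) (Finset.mem_univ r))
    exact ne_of_gt this
  -- every clique is contained in some maximal clique, hence in some Vs k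
  have hmax : ∀ S : Set (Fin n), IsClique A S → ∃ k, S ⊆ Vs k := by
    intro S hS
    have hfin : {T : Set (Fin n) | IsClique A T ∧ S ⊆ T}.Finite := Set.toFinite _
    obtain ⟨T, hT, hTmax⟩ := Set.Finite.exists_maximalFor id _ hfin ⟨S, hS, subset_rfl⟩
    have hTm : ∀ S' : Set (Fin n), IsClique A S' → T ⊆ S' → S' = T := by
      intro S' hS' hTS'
      exact Set.Subset.antisymm (hTmax ⟨hS', hT.2.trans hTS'⟩ hTS') hTS'
    obtain ⟨k, hk⟩ := (hVs T).mp ⟨hT.1, hTm⟩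
    exact ⟨k, hk ▸ hT.2⟩
  -- assign each summand to a clique
  choose f hf using fun r : Fin R => hmax _ (hclique r)
  refine ⟨fun k idx => ∑ r ∈ Finset.univ.filter (fun r => f r = k), ∏ t, v r (idx t),
    ?_, ?_⟩
  · intro idx
    rw [hAv, ← Finset.sum_fiberwise Finset.univ f (fun r => ∏ t, v r (idx t))]
  · intro k
    set s : Finset (Fin R) := Finset.univ.filter (fun r => f r = k) with hs
    refine ⟨s.card, fun r' i => v (s.equivFin.symm r') i, fun r' i => hv _ _, ?_, ?_⟩
    · intro r' i hne
      have hmem : (s.equivFin.symm r' : Fin R) ∈ s := (s.equivFin.symm r').2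
      have hfk : f (s.equivFin.symm r' : Fin R) = k := (Finset.mem_filter.mp hmem).2
      exact hfk ▸ hf _ hne
    · intro idx
      show (∑ r ∈ s, ∏ t, v r (idx t)) = ∑ r' : Fin s.card, ∏ t, v (↑(s.equivFin.symm r')) (idx t)
      rw [← Finset.sum_coe_sort s (fun r => ∏ t, v r (idx t))]
      exact (Equiv.sum_comp s.equivFin.symm
        (fun x : s => ∏ t, v (x : Fin R) (idx t))).symm
end

section
/- Feasibility transfer from sparse to dense moment relaxation (support constraint part): let V ⊆ [n] and let z_V be a truncated moment sequence on ℝ^{|V|} of degree 2t whose moment matrix M_t(z_V) is positive semidefinite. Define z ∈ ℝ^{ℕ^n_{2t}} by z_α = (z_V)_{α|V} if Supp(α) ⊆ V and z_α = 0 otherwise. Then M_t(z) is positive semidefinite. -/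
/-- Feasibility transfer from sparse to dense relaxation (moment matrix part): let
`V ⊆ [n]` and let `zV` be a moment sequence whose order-`t` moment matrix is positive
semidefinite (expressed via its quadratic form on coefficient vectors of polynomials of
degree at most `t` in the variables of `V`).  If `z` agrees with `zV` on monomials
supported in `V` and vanishes on all other monomials, then the order-`t` moment matrix of
`z` is positive semidefinite. -/
theorem sparse_to_dense_momentMatrix_psd {n : ℕ} (t : ℕ) (V : Set (Fin n))
    (z zV : (Fin n → ℕ) → ℝ)
    (hz1 : ∀ α : Fin n → ℕ, (∀ i, α i ≠ 0 → i ∈ V) → z α = zV α)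
    (hz2 : ∀ α : Fin n → ℕ, ¬ (∀ i, α i ≠ 0 → i ∈ V) → z α = 0)
    (hpsd : ∀ p : (Fin n → ℕ) →₀ ℝ,
      (∀ β ∈ p.support, (∑ i, β i ≤ t) ∧ ∀ i, β i ≠ 0 → i ∈ V) →
      0 ≤ ∑ β ∈ p.support, ∑ γ ∈ p.support, p β * p γ * zV (β + γ)) :
    ∀ p : (Fin n → ℕ) →₀ ℝ, (∀ β ∈ p.support, ∑ i, β i ≤ t) →
      0 ≤ ∑ β ∈ p.support, ∑ γ ∈ p.support, p β * p γ * z (β + γ) := by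
  intro p hdeg
  classical
  set P : (Fin n → ℕ) → Prop := fun β => ∀ i, β i ≠ 0 → i ∈ V with hP
  set q : (Fin n → ℕ) →₀ ℝ := p.filter P with hq
  have hqsupp : q.support = p.support.filter P := Finsupp.support_filter P p
  have hqval : ∀ β ∈ q.support, q β = p β := by
    intro β hβ
    rw [hqsupp, Finset.mem_filter] at hβ
    rw [hq, Finsupp.filter_apply_pos P p hβ.2]
  have key : ∑ β ∈ p.support, ∑ γ ∈ p.support, p β * p γ * z (β + γ)
      = ∑ β ∈ q.support, ∑ γ ∈ q.support, q β * q γ * zV (β + γ) := by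
    have : ∀ β ∈ p.support, ∀ γ ∈ p.support,
        p β * p γ * z (β + γ) = if P β then (if P γ then p β * p γ * zV (β + γ) else 0) else 0 := by
      intro β hβ γ hγ
      by_cases hb : P β
      · by_cases hc : P γ
        · rw [if_pos hb, if_pos hc, hz1]
          intro i hi
          by_cases h : β i = 0
          · exact hc i (by simp [Pi.add_apply, h] at hi; exact hi)
          · exact hb i h
        · rw [if_pos hb, if_neg hc]
          have : z (β + γ) = 0 := by
            apply hz2
            intro hcon
            exact hc (fun i hi => hcon i (by simp [hi]))
          rw [this, mul_zero]
      · rw [if_neg hb]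
        have : z (β + γ) = 0 := by
          apply hz2
          intro hcon
          exact hb (fun i hi => hcon i (by simp [hi]))
        rw [this, mul_zero]
    calc ∑ β ∈ p.support, ∑ γ ∈ p.support, p β * p γ * z (β + γ)
        = ∑ β ∈ p.support, if P β then (∑ γ ∈ p.support.filter P, p β * p γ * zV (β + γ)) else 0 := by
          apply Finset.sum_congr rfl
          intro β hβ
          by_cases hb : P β
          · rw [if_pos hb, Finset.sum_filter]
            apply Finset.sum_congr rfl
            intro γ hγ
            rw [this β hβ γ hγ, if_pos hb]
          · rw [if_neg hb]
            apply Finset.sum_eq_zero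
            intro γ hγ
            rw [this β hβ γ hγ, if_neg hb]
      _ = ∑ β ∈ p.support.filter P, ∑ γ ∈ p.support.filter P, p β * p γ * zV (β + γ) := by
          rw [Finset.sum_filter]
      _ = ∑ β ∈ p.support.filter P, ∑ γ ∈ p.support.filter P, q β * q γ * zV (β + γ) := by
          apply Finset.sum_congr rfl
          intro β hβ
          apply Finset.sum_congr rfl
          intro γ hγ
          rw [hqval β (by rwa [hqsupp]), hqval γ (by rwa [hqsupp])]
      _ = ∑ β ∈ q.support, ∑ γ ∈ q.support, q β * q γ * zV (β + γ) := by rw [hqsupp]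
  rw [key]
  apply hpsd
  intro β hβ
  rw [hqsupp, Finset.mem_filter] at hβ
  exact ⟨hdeg β hβ.1, hβ.2⟩
end
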